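/- Let N ≥ 2, let φ : Fin N → ℝ be such that φ_q > −1 for at least one index q, and let B : Fin N → ℝ. Define the clip-and-rescale output φ**_p = 2(1+min(1,max(−1,φ_p)))/(2 ∑_{q}(1+min(1,max(−1,φ_q)))/2) − 1 (i.e., the clipping step followed by the rescaling step), and the conservation step φ^b_p = φ**_p + ∑_{q=1}^N W_{p,q}(φ**) B_q. If φ_N ≤ −1, then: (i) φ^b_N = −1 (the absent phase remains absent after the boundedness mapping); and (ii) for every p ≠ N, φ**_p = 2 C*_p / ∑_{q=1}^{N−1} C*_q − 1 with C*_q = (1+min(1,max(−1,φ_q)))/2 and φ^b_p = φ**_p + ∑_{q=1}^{N−1} W_{p,q}(φ**) B_q; that is, the formulation of the boundedness mapping for the present phases reduces to the corresponding one excluding the absent phase. -/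
import Mathlib


/-- The volume-distribution weight matrix:
`W φ p q = (1+φ_p)(1-φ_q)` if `p = q` and `-(1+φ_p)(1+φ_q)` otherwise. -/
def volW {N : ℕ} (φ : Fin N → ℝ) (p q : Fin N) : ℝ :=
  if p = q then (1 + φ p) * (1 - φ q) else -((1 + φ p) * (1 + φ q))

/-- Clipping step of the boundedness mapping: `clip x = min 1 (max (-1) x)`. -/
noncomputable def clip (x : ℝ) : ℝ := min 1 (max (-1) x)

/-- Clipped volume fraction: `C*_p = (1 + clip φ_p) / 2`. -/
noncomputable def Cstar {N : ℕ} (φ : Fin N → ℝ) (p : Fin N) : ℝ := (1 + clip (φ p)) / 2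

/-- Rescaled order parameter (clip-and-rescale output):
`φ**_p = 2 C*_p / (∑ q, C*_q) - 1`. -/
noncomputable def φss {N : ℕ} (φ : Fin N → ℝ) (p : Fin N) : ℝ :=
  2 * Cstar φ p / (∑ q, Cstar φ q) - 1

/-- Output of the conservation step of the boundedness mapping:
`φ^b_p = φ**_p + ∑ q, W_{p,q}(φ**) B_q`. -/
noncomputable def φb {N : ℕ} (φ B : Fin N → ℝ) (p : Fin N) : ℝ :=
  φss φ p + ∑ q, volW (φss φ) p q * B q

/-- Reduction consistency of the boundedness mapping (pointwise form of Theorem 5):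
in an `(N+1)`-phase system (with `N + 1 ≥ 2`), if the last phase is absent
(`φ_{N+1} ≤ -1`) while some phase is present, then after the boundedness mapping
the absent phase remains absent (`φ^b_{N+1} = -1`), and for every present phase the
clip-and-rescale output and the conservation step reduce to the corresponding
`N`-phase formulations excluding the absent phase. -/
theorem boundedness_mapping_reduction (N : ℕ) (hN : 1 ≤ N)
    (φ B : Fin (N + 1) → ℝ)
    (hex : ∃ q, -1 < φ q)
    (habs : φ (Fin.last N) ≤ -1) :
    φb φ B (Fin.last N) = -1 ∧
    ∀ p : Fin (N + 1), p ≠ Fin.last N →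
      φss φ p = 2 * Cstar φ p / (∑ q : Fin N, Cstar φ q.castSucc) - 1 ∧
      φb φ B p = φss φ p + ∑ q : Fin N, volW (φss φ) p q.castSucc * B q.castSucc := by

  have hclip : clip (φ (Fin.last N)) = -1 := by
    unfold clip
    rw [max_eq_left habs]
    exact min_eq_right (by norm_num)
  have hC : Cstar φ (Fin.last N) = 0 := by
    simp [Cstar, hclip]
  have hsum : (∑ q : Fin (N+1), Cstar φ q) = ∑ q : Fin N, Cstar φ q.castSucc := by
    rw [Fin.sum_univ_castSucc, hC, add_zero]
  have hlast : φss φ (Fin.last N) = -1 := by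
    simp [φss, hC]
  constructor
  · unfold φb
    rw [hlast]
    have : ∀ q, volW (φss φ) (Fin.last N) q * B q = 0 := by
      intro q
      unfold volW
      rw [hlast]
      split <;> ring
    rw [Finset.sum_congr rfl fun q _ => this q]
    simp
  · intro p hp
    constructor
    · rw [φss, hsum]
    · unfold φb
      congr 1
      rw [Fin.sum_univ_castSucc]
      have : volW (φss φ) p (Fin.last N) * B (Fin.last N) = 0 := by
        unfold volW
        rw [hlast, if_neg hp]
        ring
      rw [this, add_zero]
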